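/- For any directed graph G with a non-empty vertex set and any infinitely separable partition {A_1, A_2} of its vertices, there exists a non-empty subset B of the vertices of G such that (i) B ⊆ A_1 or B ⊆ A_2, and (ii) there are no edges from a vertex in B to a vertex not in B. -/

import Mathlib

/-- Infinitary propositional formulas over signature `σ`:
atoms, conjunctions and disjunctions of (index-)sets of formulas, implication. -/
inductive Formula (σ : Type) : Type 1
  | atom : σ → Formula σ
  | conj : (ι : Type) → (ι → Formula σ) → Formula σ
  | disj : (ι : Type) → (ι → Formula σ) → Formula σ
  | imp : Formula σ → Formula σ → Formula σ

namespace Formula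

variable {σ : Type}

/-- `⊥` is the empty disjunction. -/
def bot : Formula σ := Formula.disj Empty (fun e => e.elim)

/-- Binary conjunction `F ∧ G`. -/
def and (F G : Formula σ) : Formula σ := Formula.conj Bool (fun b => if b then F else G)

/-- Binary disjunction `F ∨ G`. -/
def or (F G : Formula σ) : Formula σ := Formula.disj Bool (fun b => if b then F else G)

/-- Negation `¬F` abbreviates `F → ⊥`. -/
def neg (F : Formula σ) : Formula σ := Formula.imp F bot

/-- Conjunction of a set of atoms. -/
def conjAtoms (S : Set σ) : Formula σ := Formula.conj S (fun p => Formula.atom p.val)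

/-- Satisfaction of an infinitary formula by an interpretation `I ⊆ σ`. -/
def Sat (I : Set σ) : Formula σ → Prop
  | .atom p => p ∈ I
  | .conj _ f => ∀ i, Sat I (f i)
  | .disj _ f => ∃ i, Sat I (f i)
  | .imp F G => Sat I F → Sat I G

open Classical in
/-- The reduct `F^I`. -/
noncomputable def reduct (I : Set σ) : Formula σ → Formula σ
  | .atom p => if p ∈ I then Formula.atom p else bot
  | .conj ι f => Formula.conj ι (fun i => reduct I (f i))
  | .disj ι f => Formula.disj ι (fun i => reduct I (f i))
  | .imp F G => if Sat I (Formula.imp F G) then Formula.imp (reduct I F) (reduct I G) else bot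

/-- `I` is an `A`-stable model of `F`: `I` is minimal w.r.t. `≤_A`
(`J ≤_A I` iff `J ⊆ I` and `I \ J ⊆ A`) among interpretations satisfying `F^I`. -/
def AStable (A : Set σ) (I : Set σ) (F : Formula σ) : Prop :=
  Sat I (reduct I F) ∧ ∀ J : Set σ, J ⊆ I → I \ J ⊆ A → Sat J (reduct I F) → J = I

/-- A stable model is a `σ`-stable model. -/
def Stable (I : Set σ) (F : Formula σ) : Prop := AStable Set.univ I F

/-- The strictly positive atoms `P(F)`. -/
def spos : Formula σ → Set σ
  | .atom p => {p}
  | .conj _ f => ⋃ i, spos (f i)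
  | .disj _ f => ⋃ i, spos (f i)
  | .imp _ H => spos H

/-- `F` is (syntactically) the formula `⊥`, i.e. an empty disjunction. -/
def IsBot : Formula σ → Prop
  | .disj ι _ => IsEmpty ι
  | _ => False

open Classical in
mutual
/-- Positive nonnegated atoms `Pnn(F)`. -/
noncomputable def pnn : Formula σ → Set σ
  | .atom p => {p}
  | .conj _ f => ⋃ i, pnn (f i)
  | .disj _ f => ⋃ i, pnn (f i)
  | .imp G H => if IsBot H then ∅ else nnn G ∪ pnn H

/-- Negative nonnegated atoms `Nnn(F)`. -/
noncomputable def nnn : Formula σ → Set σ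
  | .atom _ => ∅
  | .conj _ f => ⋃ i, nnn (f i)
  | .disj _ f => ⋃ i, nnn (f i)
  | .imp G H => if IsBot H then ∅ else pnn G ∪ nnn H
end

/-- The rules of a formula, as antecedent/consequent pairs. -/
def rules : Formula σ → Set (Formula σ × Formula σ)
  | .atom _ => ∅
  | .conj _ f => ⋃ i, rules (f i)
  | .disj _ f => ⋃ i, rules (f i)
  | .imp G H => insert (G, H) (rules H)

/-- Edge relation of the positive dependency graph `DG_A[F]` (vertex set `A`). -/
noncomputable def DGEdge (F : Formula σ) (A : Set σ) (p q : σ) : Prop :=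
  p ∈ A ∧ q ∈ A ∧ ∃ R ∈ rules F, p ∈ spos R.2 ∧ q ∈ pnn R.1

/-- The atoms occurring in a formula. -/
def atoms : Formula σ → Set σ
  | .atom p => {p}
  | .conj _ f => ⋃ i, atoms (f i)
  | .disj _ f => ⋃ i, atoms (f i)
  | .imp G H => atoms G ∪ atoms H

/-- `G` is a definition for the set `Q` of atoms: a conjunction of formulas
`H ∧ C^∧ → q` with `q ∈ Q`, `C ⊆ Q`, and no atom of `Q` occurring in `H`. -/
def IsDefinition (Q : Set σ) (G : Formula σ) : Prop :=
  ∃ (ι : Type) (g : ι → Formula σ), G = Formula.conj ι g ∧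
    ∀ i, ∃ (H : Formula σ) (C : Set σ) (q : σ),
      q ∈ Q ∧ C ⊆ Q ∧ (∀ p ∈ Q, p ∉ atoms H) ∧
      g i = Formula.imp (Formula.and H (conjAtoms C)) (Formula.atom q)

end Formula

section Graph

variable {V : Type*}

/-- An infinite walk in the directed graph with edge relation `E`. -/
def IsInfWalk (E : V → V → Prop) (w : ℕ → V) : Prop := ∀ i, E (w i) (w (i + 1))

/-- The partition `{P₁, P₂}` is infinitely separable: every infinite walk
visits `P₁` or `P₂` only finitely often. -/
def InfSeparable (E : V → V → Prop) (P1 P2 : Set V) : Prop :=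
  ∀ w : ℕ → V, IsInfWalk E w → {i | w i ∈ P1}.Finite ∨ {i | w i ∈ P2}.Finite

/-- `u` and `v` are in the same strongly connected component:
each is reachable from the other. -/
def SameSCC (E : V → V → Prop) (u v : V) : Prop :=
  Relation.ReflTransGen E u v ∧ Relation.ReflTransGen E v u

/-- The partition `{P₁, P₂}` is separable: every strongly connected
component is contained in `P₁` or in `P₂`. -/
def Separable (E : V → V → Prop) (P1 P2 : Set V) : Prop :=
  ∀ u v, SameSCC E u v → ((u ∈ P1 ∧ v ∈ P1) ∨ (u ∈ P2 ∧ v ∈ P2))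

end Graph
/-!
If no non-empty closed set lies inside one part, then the set of vertices reachable from any
vertex is closed and non-empty, hence meets both parts: from every vertex a non-trivial path
leads into the other part. Following such paths one after another gives an infinite walk that
alternates between the parts infinitely often, contradicting infinite separability.
-/

open Relation

section Reachability

variable {V : Type} {E : V → V → Prop}

theorem exists_reflTransGen_notMem_of_forall_not_closed {S : Set V}
    (hS : ∀ B : Set V, B.Nonempty → B ⊆ S → ∃ u ∈ B, ∃ v, E u v ∧ v ∉ B) (v : V) :
    ∃ u, ReflTransGen E v u ∧ u ∉ S := by
  by_contra! hreach
  obtain ⟨u, hu, u', huu', hu'⟩ := hS {u | ReflTransGen E v u} ⟨v, .refl⟩ hreach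
  exact hu' (hu.tail huu')

theorem exists_path_of_transGen {a b : V} (h : TransGen E a b) :
    ∃ n, ∃ g : ℕ → V, 0 < n ∧ g 0 = a ∧ g n = b ∧ ∀ i < n, E (g i) (g (i + 1)) := by
  induction h using TransGen.head_induction_on with
  | @single a hab =>
    exact ⟨1, fun i => if i = 0 then a else b, one_pos, rfl, rfl, fun i hi => by simp_all⟩
  | @head a c hac _ ih =>
    obtain ⟨n, g, -, hg0, hgn, hg⟩ := ih
    refine ⟨n + 1, fun | 0 => a | i + 1 => g i, n.succ_pos, rfl, hgn, ?_⟩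
    rintro (_ | i) hi
    · simpa [hg0] using hac
    · exact hg i (by omega)

theorem existsUnique_le_and_lt_succ_of_strictMono {t : ℕ → ℕ} (ht : StrictMono t) (h0 : t 0 = 0)
    (i : ℕ) : ∃! k, t k ≤ i ∧ i < t (k + 1) := by
  obtain ⟨k, hk⟩ := ht.exists_between_of_tendsto_atTop ht.tendsto_atTop (x := i + 1) (by omega)
  refine ⟨k, ⟨by omega, by omega⟩, fun l ⟨hl, hl'⟩ => le_antisymm ?_ ?_⟩
  · exact Nat.lt_succ_iff.mp (ht.lt_iff_lt.mp (hl.trans_lt (show i < t (k + 1) by omega)))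
  · exact Nat.lt_succ_iff.mp (ht.lt_iff_lt.mp (show t k < t (l + 1) by omega))

theorem exists_infWalk_through_of_transGen {x : ℕ → V}
    (hx : ∀ k, TransGen E (x k) (x (k + 1))) :
    ∃ w : ℕ → V, ∃ t : ℕ → ℕ, IsInfWalk E w ∧ StrictMono t ∧ ∀ k, w (t k) = x k := by
  choose n g hn hg0 hgn hg using fun k => exists_path_of_transGen (hx k)
  -- the walk follows the `k`-th path during the times `t k ≤ i < t (k + 1)`
  set t : ℕ → ℕ := fun k => ∑ j ∈ Finset.range k, n j
  have ht_succ (k : ℕ) : t (k + 1) = t k + n k := Finset.sum_range_succ n k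
  have ht : StrictMono t :=
    strictMono_nat_of_lt_succ fun k => by have := hn k; rw [ht_succ]; omega
  choose seg hseg hseg_unique using
    existsUnique_le_and_lt_succ_of_strictMono ht (Finset.sum_range_zero n)
  have seg_eq {i k : ℕ} (h₁ : t k ≤ i) (h₂ : i < t (k + 1)) : seg i = k :=
    (hseg_unique i k ⟨h₁, h₂⟩).symm
  refine ⟨fun i => g (seg i) (i - t (seg i)), t, fun i => ?_, ht,
    fun k => by simp [seg_eq le_rfl (ht k.lt_succ_self), hg0]⟩
  obtain ⟨h₁, h₂⟩ := hseg i
  have h₂' : i < t (seg i) + n (seg i) := ht_succ (seg i) ▸ h₂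
  rcases (show i + 1 ≤ t (seg i + 1) from h₂).lt_or_eq with hlt | heq
  · have hi : i + 1 - t (seg i) = i - t (seg i) + 1 := by omega
    simpa only [seg_eq (h₁.trans i.le_succ) hlt, hi] using hg (seg i) _ (by omega)
  · have hi : i - t (seg i) + 1 = n (seg i) := by have := ht_succ (seg i); omega
    have hseg_succ : seg (i + 1) = seg i + 1 :=
      seg_eq heq.ge (heq ▸ ht (seg i + 1).lt_succ_self)
    show E (g (seg i) _) (g (seg (i + 1)) (i + 1 - t (seg (i + 1))))
    rw [hseg_succ, heq, Nat.sub_self, hg0, ← hgn, ← hi]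
    exact hg (seg i) _ (by omega)

theorem infinite_setOf_mem_of_alternating {S : Set V} {x : ℕ → V}
    (hx : ∀ k, x (k + 1) ∈ S ↔ x k ∉ S) : {k | x k ∈ S}.Infinite := by
  refine Set.infinite_of_forall_exists_gt fun k => ?_
  by_cases hk : x (k + 1) ∈ S
  · exact ⟨k + 1, hk, k.lt_succ_self⟩
  · exact ⟨k + 2, (hx (k + 1)).mpr hk, by omega⟩

theorem exists_infWalk_infinite_mem_and_notMem [Nonempty V] {S : Set V}
    (hS : ∀ v, ∃ u, ReflTransGen E v u ∧ (u ∈ S ↔ v ∉ S)) :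
    ∃ w : ℕ → V, IsInfWalk E w ∧ {i | w i ∈ S}.Infinite ∧ {i | w i ∈ Sᶜ}.Infinite := by
  choose next hnext hnext_mem using hS
  set x : ℕ → V := fun k => next^[k] (Classical.arbitrary V)
  have hx_succ (k : ℕ) : x (k + 1) = next (x k) := Function.iterate_succ_apply' ..
  have hx_mem (k : ℕ) : x (k + 1) ∈ S ↔ x k ∉ S := hx_succ k ▸ hnext_mem (x k)
  have hx_ne (k : ℕ) : x (k + 1) ≠ x k := fun h => by simpa [h] using hx_mem k
  have hx_trans (k : ℕ) : TransGen E (x k) (x (k + 1)) :=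
    (reflTransGen_iff_eq_or_transGen.mp (hx_succ k ▸ hnext (x k))).resolve_left (hx_ne k)
  obtain ⟨w, t, hw, ht, hwt⟩ := exists_infWalk_through_of_transGen hx_trans
  have visits (T : Set V) (hT : ∀ k, x (k + 1) ∈ T ↔ x k ∉ T) : {i | w i ∈ T}.Infinite :=
    ((infinite_setOf_mem_of_alternating hT).image ht.injective.injOn).mono <| by
      rintro _ ⟨k, hk, rfl⟩
      simpa [hwt] using hk
  exact ⟨w, hw, visits S hx_mem, visits Sᶜ fun k => by simp [hx_mem]⟩

end Reachability

/-- in a non-empty graph with an infinitely separable partition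
`{A₁, A₂}`, there is a non-empty set `B` of vertices, contained in `A₁` or in
`A₂`, with no edges leaving `B`. -/
theorem exists_closed_subset_of_infSeparable {V : Type} [Nonempty V]
    (E : V → V → Prop) (A1 A2 : Set V)
    (hdisj : Disjoint A1 A2) (hcover : A1 ∪ A2 = Set.univ)
    (h : InfSeparable E A1 A2) :
    ∃ B : Set V, B.Nonempty ∧ (B ⊆ A1 ∨ B ⊆ A2) ∧
      ∀ u ∈ B, ∀ v : V, E u v → v ∈ B := by
  by_contra! hB
  obtain rfl : A1ᶜ = A2 := IsCompl.compl_eq ⟨hdisj, codisjoint_iff.mpr hcover⟩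
  have hreach (v : V) : ∃ u, ReflTransGen E v u ∧ (u ∈ A1 ↔ v ∉ A1) := by
    by_cases hv : v ∈ A1
    · obtain ⟨u, hvu, hu⟩ :=
        exists_reflTransGen_notMem_of_forall_not_closed (fun B hne hsub => hB B hne (.inl hsub)) v
      exact ⟨u, hvu, by tauto⟩
    · obtain ⟨u, hvu, hu⟩ :=
        exists_reflTransGen_notMem_of_forall_not_closed (fun B hne hsub => hB B hne (.inr hsub)) v
      exact ⟨u, hvu, by simpa [hv] using hu⟩
  obtain ⟨w, hw, h₁, h₂⟩ := exists_infWalk_infinite_mem_and_notMem hreach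
  exact (h w hw).elim h₁ h₂
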